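/- Let G be a connected simple graph on a finite vertex set V, let C ⊆ V be a clique containing at least one loyal follower, and let v ∈ C. Then v has a neighbor u with D(v) < D(u) if and only if v has a neighbor lying outside of C. That is, the distance-centrality detection rule identifies exactly the leaders (vertices with a neighbor outside their community) and never the loyal followers. -/

import Mathlib

/-!
A loyal follower `f` of a clique `C` is at least as far from every vertex `w ≠ f` as any
`u ∈ C` is, because a geodesic from `f` leaves through a vertex of `C`, which `u` sees at
distance at most one. Comparing `D(u)` with `D(f)` term by term after swapping `u` and `f`
gives `D(u) ≤ D(f)`, strictly when `u` has a neighbor `x ∉ C`, since then `d(u,x) = 1 < d(f,x)`.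
So a vertex with a neighbor outside `C` is beaten by the follower, which is its neighbor, while
a vertex whose neighbors all lie in `C` is itself a loyal follower, so no neighbor beats it.
-/

open Finset

namespace SimpleGraph

variable {V : Type*} {G : SimpleGraph V} {C : Set V} {u v f w x : V}

lemma IsClique.dist_le_one (hC : G.IsClique C) (hu : u ∈ C) (hv : v ∈ C) : G.dist u v ≤ 1 := by
  rcases eq_or_ne u v with rfl | hne
  · simp
  · exact (dist_eq_one_iff_adj.mpr (hC hu hv hne)).le

lemma Connected.dist_le_dist_of_neighborSet_subset (hconn : G.Connected) (hC : G.IsClique C)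
    (hf : G.neighborSet f ⊆ C) (hu : u ∈ C) (hw : w ≠ f) : G.dist u w ≤ G.dist f w := by
  obtain ⟨p, hp⟩ := (hconn f w).exists_walk_length_eq_dist
  cases p with
  | nil => exact absurd rfl hw
  | @cons _ n _ hfn q =>
    calc G.dist u w ≤ G.dist u n + G.dist n w := hconn.dist_triangle
      _ ≤ 1 + q.length := add_le_add (hC.dist_le_one hu (hf hfn)) (dist_le q)
      _ = G.dist f w := by rw [← hp, Walk.length_cons, add_comm]

lemma Connected.dist_swap_le_dist [DecidableEq V] (hconn : G.Connected) (hC : G.IsClique C)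
    (hf : G.neighborSet f ⊆ C) (hu : u ∈ C) (w : V) :
    G.dist u (Equiv.swap u f w) ≤ G.dist f w := by
  rcases eq_or_ne w u with rfl | hwu
  · rw [Equiv.swap_apply_left, dist_comm]
  rcases eq_or_ne w f with rfl | hwf
  · simp
  rw [Equiv.swap_apply_of_ne_of_ne hwu hwf]
  exact hconn.dist_le_dist_of_neighborSet_subset hC hf hu hwf

variable [Fintype V]

lemma Connected.sum_dist_le_sum_dist (hconn : G.Connected) (hC : G.IsClique C)
    (hf : G.neighborSet f ⊆ C) (hu : u ∈ C) :
    ∑ w, G.dist u w ≤ ∑ w, G.dist f w := by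
  classical
  rw [← Equiv.sum_comp (Equiv.swap u f) (G.dist u)]
  exact sum_le_sum fun w _ ↦ hconn.dist_swap_le_dist hC hf hu w

lemma Connected.sum_dist_lt_sum_dist (hconn : G.Connected) (hC : G.IsClique C)
    (hfC : f ∈ C) (hf : G.neighborSet f ⊆ C) (hu : u ∈ C) (hux : G.Adj u x) (hx : x ∉ C) :
    ∑ w, G.dist u w < ∑ w, G.dist f w := by
  classical
  rw [← Equiv.sum_comp (Equiv.swap u f) (G.dist u)]
  refine sum_lt_sum (fun w _ ↦ hconn.dist_swap_le_dist hC hf hu w) ⟨x, mem_univ x, ?_⟩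
  have hxf : x ≠ f := fun h ↦ hx (h ▸ hfC)
  have hux_dist : G.dist u x = 1 := dist_eq_one_iff_adj.mpr hux
  have hfx_pos : 0 < G.dist f x := hconn.pos_dist_of_ne hxf.symm
  have hfx_ne_one : G.dist f x ≠ 1 := fun h ↦ hx (hf (dist_eq_one_iff_adj.mp h))
  rw [Equiv.swap_apply_of_ne_of_ne hux.ne.symm hxf]
  omega

end SimpleGraph

open SimpleGraph

/-- Let G be a connected simple graph on a finite vertex set V, let C ⊆ V be a
clique containing at least one loyal follower, and let v ∈ C. Then v has a neighbor u with
D(v) < D(u) if and only if v has a neighbor lying outside of C. -/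
theorem detection_rule_characterizes_leaders {V : Type*} [Fintype V] (G : SimpleGraph V)
    (hconn : G.Connected) (C : Set V) (hC : G.IsClique C)
    (hfollower : ∃ f ∈ C, ∀ u : V, G.Adj f u → u ∈ C)
    (v : V) (hvC : v ∈ C) :
    (∃ u : V, G.Adj v u ∧ (∑ w : V, G.dist v w) < (∑ w : V, G.dist u w)) ↔
      (∃ u : V, G.Adj v u ∧ u ∉ C) := by
  obtain ⟨f, hfC, hf⟩ := hfollower
  constructor
  · rintro ⟨u, hvu, hlt⟩
    by_contra! hv
    exact (hconn.sum_dist_le_sum_dist hC hv (hv u hvu)).not_gt hlt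
  · rintro ⟨x, hvx, hxC⟩
    have hvf : v ≠ f := by
      rintro rfl
      exact hxC (hf x hvx)
    exact ⟨f, hC hvC hfC hvf, hconn.sum_dist_lt_sum_dist hC hfC hf hvC hvx hxC⟩
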